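/- Let n and i be positive integers with i < n and gcd(n, i) = 1. Then the ℂ-linear span of all products of between 1 and 2n − 2 elements of {J_n^i, (J_nᵀ)^{n−i}} is all of M_n(ℂ); that is, l_0({J_n^i, (J_nᵀ)^{n−i}}) = l({J_n^i, (J_nᵀ)^{n−i}}) = 2n − 2. -/

import Mathlib

open Matrix

/-- The `n × n` nilpotent Jordan block over `ℂ`. -/
def jordan (n : ℕ) : Matrix (Fin n) (Fin n) ℂ :=
  Matrix.of fun a b => if (a : ℕ) + 1 = (b : ℕ) then 1 else 0

/-- `L_k(S)`: the ℂ-linear span of all words in `S` of length at most `k`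
(including the empty word, the identity matrix). -/
noncomputable def wordSpan (n k : ℕ) (S : Set (Matrix (Fin n) (Fin n) ℂ)) :
    Submodule ℂ (Matrix (Fin n) (Fin n) ℂ) :=
  Submodule.span ℂ {M | ∃ w : List (Matrix (Fin n) (Fin n) ℂ),
    w.length ≤ k ∧ (∀ x ∈ w, x ∈ S) ∧ M = w.prod}

/-- `L_k^0(S)`: the ℂ-linear span of all words in `S` of length between `1` and `k`. -/
noncomputable def wordSpan0 (n k : ℕ) (S : Set (Matrix (Fin n) (Fin n) ℂ)) :
    Submodule ℂ (Matrix (Fin n) (Fin n) ℂ) :=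
  Submodule.span ℂ {M | ∃ w : List (Matrix (Fin n) (Fin n) ℂ),
    1 ≤ w.length ∧ w.length ≤ k ∧ (∀ x ∈ w, x ∈ S) ∧ M = w.prod}

/-!
Write `A = J^i` and `B = (Jᵀ)^(n-i)`. In row `a` exactly one of them is nonzero (`A` if
`a + i < n`, `B` otherwise), and it has a single `1`, in column `a + i mod n`. So every word in
`A, B` is a partial permutation matrix: its `(a, b)` entry is `1` iff the word is the itinerary of
`a` under the rotation `x ↦ x + i` of `ℤ/n` (recording at each step whether it wraps around) and
`b = a + (length) * i`.

Because `i` is a unit mod `n`, an itinerary of length `n - 1` already determines its starting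
point: otherwise the indicator of `{x | x + i < n}`, an interval of length `n - i`, would be
invariant under a nonzero translation. Hence the itinerary word of any length `L ≥ n - 1` from `a`
is the matrix unit `E_{a, a + L i}`, and every matrix unit arises for some `L ∈ [n - 1, 2n - 2]`.

Conversely, for `k < 2n - 2` the itinerary word of length `k + 1` from `i - 1` is not a combination
of shorter words. If `k + 1 < n`, the entry at `(i - 1, i - 1 + (k + 1) i)` separates it. Otherwise
the entry there minus the entry one step down the diagonal does: a shorter word can only reach
these positions if its length is `k + 1 - n ≤ n - 2`, and the itineraries of length `n - 2` from
`i - 1` and from `i` coincide; the word itself, of length at least `n`, has only the first entry.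
-/

section Itinerary

variable {ι α : Type*}

def itinerary (c : ι → α) (f : ι → ι) (L : ℕ) (a : ι) : List α :=
  List.ofFn fun t : Fin L => c (f^[t] a)

variable (c : ι → α) (f : ι → ι)

@[simp]
lemma length_itinerary (L : ℕ) (a : ι) : (itinerary c f L a).length = L :=
  List.length_ofFn

lemma itinerary_succ (L : ℕ) (a : ι) :
    itinerary c f (L + 1) a = c a :: itinerary c f L (f a) := by
  simp [itinerary, List.ofFn_succ, Function.iterate_succ_apply]

lemma itinerary_eq_itinerary_iff {L : ℕ} {a b : ι} :
    itinerary c f L a = itinerary c f L b ↔ ∀ t < L, c (f^[t] a) = c (f^[t] b) := by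
  simp [itinerary, List.ofFn_inj, funext_iff, Fin.forall_iff]

variable {c f} {R : Type*} [Fintype ι] [DecidableEq ι] [DecidableEq α] [Semiring R]

theorem Matrix.list_prod_map_apply_of_apply {M : α → Matrix ι ι R}
    (hM : ∀ x a b, M x a b = if x = c a ∧ f a = b then 1 else 0) (w : List α) (a b : ι) :
    (w.map M).prod a b =
      if w = itinerary c f w.length a ∧ f^[w.length] a = b then 1 else 0 := by
  induction w generalizing a with
  | nil => simp [itinerary, Matrix.one_apply]
  | cons x w ih =>
    by_cases hx : x = c a
    · have hrow : ∀ d, M x a d = if f a = d then 1 else 0 := fun d => by simp [hM, hx]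
      simp only [List.map_cons, List.prod_cons, Matrix.mul_apply, hrow, ite_mul, one_mul, zero_mul,
        Finset.sum_ite_eq, Finset.mem_univ, if_true, ih]
      simp [itinerary_succ, hx, Function.iterate_succ_apply]
    · simp [Matrix.mul_apply, hM, hx, itinerary_succ]

end Itinerary

lemma wordSpan0_le_wordSpan (n k : ℕ) (S : Set (Matrix (Fin n) (Fin n) ℂ)) :
    wordSpan0 n k S ≤ wordSpan n k S :=
  Submodule.span_mono fun _ ⟨w, _, hk, hS, hM⟩ => ⟨w, hk, hS, hM⟩

lemma wordSpan_mono (n : ℕ) (S : Set (Matrix (Fin n) (Fin n) ℂ)) :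
    Monotone fun k => wordSpan n k S :=
  fun _ _ hkl => Submodule.span_mono fun _ ⟨w, hk, hS, hM⟩ => ⟨w, hk.trans hkl, hS, hM⟩

lemma wordSpan0_mono (n : ℕ) (S : Set (Matrix (Fin n) (Fin n) ℂ)) :
    Monotone fun k => wordSpan0 n k S :=
  fun _ _ hkl =>
    Submodule.span_mono fun _ ⟨w, h1, hk, hS, hM⟩ => ⟨w, h1, hk.trans hkl, hS, hM⟩

section Range

variable {n : ℕ} {α : Type*} (M : α → Matrix (Fin n) (Fin n) ℂ)

lemma list_prod_map_mem_wordSpan0 {w : List α} {k : ℕ} (h1 : 1 ≤ w.length)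
    (hk : w.length ≤ k) : (w.map M).prod ∈ wordSpan0 n k (Set.range M) :=
  Submodule.subset_span ⟨w.map M, by simpa using h1, by simpa using hk,
    fun _ hx => by obtain ⟨y, -, rfl⟩ := List.mem_map.1 hx; exact ⟨y, rfl⟩, rfl⟩

lemma wordSpan_range_le_ker {k : ℕ} {φ : Matrix (Fin n) (Fin n) ℂ →ₗ[ℂ] ℂ}
    (hφ : ∀ w : List α, w.length ≤ k → φ (w.map M).prod = 0) :
    wordSpan n k (Set.range M) ≤ LinearMap.ker φ := by
  rw [wordSpan, Submodule.span_le]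
  rintro _ ⟨w, hk, hS, rfl⟩
  obtain ⟨v, rfl⟩ : w ∈ Set.range (List.map M) := by rwa [Set.range_list_map]
  exact hφ v (by simpa using hk)

end Range

lemma sInf_setOf_eq_succ_eq {α : Type*} [PartialOrder α] [OrderTop α] {V : ℕ → α}
    (hV : Monotone V) {N : ℕ} (htop : V N = ⊤) (hlt : ∀ k < N, V k ≠ V (k + 1)) :
    sInf {k | V k = V (k + 1)} = N := by
  have hN : V N = V (N + 1) := by rw [htop, eq_comm, ← top_le_iff, ← htop]; exact hV N.le_succ
  exact le_antisymm (Nat.sInf_le hN) (le_csInf ⟨N, hN⟩ fun k hk => not_lt.1 fun h => hlt k h hk)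

lemma jordan_pow_apply (n k : ℕ) (a b : Fin n) :
    (jordan n ^ k) a b = if (a : ℕ) + k = b then 1 else 0 := by
  induction k generalizing a with
  | zero => simp [Matrix.one_apply, Fin.ext_iff]
  | succ k ih =>
    rw [pow_succ', Matrix.mul_apply]
    simp only [ih]
    simp only [jordan, Matrix.of_apply, ite_mul, one_mul, zero_mul]
    split_ifs with h
    · rw [Fintype.sum_eq_single ⟨a + 1, by omega⟩
        fun j hj => if_neg fun h' => hj (Fin.ext h'.symm), if_pos rfl, if_pos (by simp only; omega)]
    · exact Finset.sum_eq_zero fun j _ => by split_ifs <;> first | rfl | omega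

section JordanLetters

variable {n i : ℕ}

noncomputable def jordanLetter (n i : ℕ) (x : Bool) : Matrix (Fin n) (Fin n) ℂ :=
  if x then jordan n ^ i else (jordan n)ᵀ ^ (n - i)

def noWrap (i : ℕ) (a : Fin n) : Bool := decide ((a : ℕ) + i < n)

lemma range_jordanLetter :
    Set.range (jordanLetter n i) = {jordan n ^ i, (jordan n)ᵀ ^ (n - i)} := by
  ext M
  simp [jordanLetter, or_comm]

open Fin.CommRing

variable [NeZero n]

lemma Fin.val_add_natCast (a : Fin n) (m : ℕ) : (a + m).val = (a.val + m) % n := by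
  rw [Fin.val_add, Fin.val_natCast, Nat.add_mod_mod]

lemma natCast_mul_eq_natCast_mul_iff (hcop : n.Coprime i) {s t : ℕ} :
    (s : Fin n) * i = t * i ↔ s ≡ t [MOD n] := by
  rw [← Nat.cast_mul, ← Nat.cast_mul, Fin.ext_iff, Fin.val_natCast, Fin.val_natCast]
  exact ⟨Nat.ModEq.cancel_right_of_coprime hcop, fun h => h.mul_right i⟩

lemma natCast_mul_ne_zero (hcop : n.Coprime i) {s : ℕ} (hs0 : 0 < s) (hs : s < n) :
    (s : Fin n) * i ≠ 0 := by
  rw [← Nat.cast_mul, Ne, Fin.natCast_eq_zero]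
  exact fun h => Nat.not_dvd_of_pos_of_lt hs0 hs (hcop.dvd_of_dvd_mul_right h)

lemma bijective_add_natCast_mul (hcop : n.Coprime i) (a : Fin n) :
    Function.Bijective fun t : Fin n => a + (t : ℕ) * i := by
  rw [← Finite.injective_iff_bijective]
  intro s t h
  exact Fin.ext (((natCast_mul_eq_natCast_mul_iff hcop).1 (add_left_cancel h)).eq_of_lt_of_lt
    s.isLt t.isLt)

lemma add_eq_of_add_natCast_mul_eq (hcop : n.Coprime i) {a : Fin n} {L m : ℕ} (hLm : L < m)
    (hm : m < L + 2 * n) (h : a + L * i = a + m * i) : L + n = m := by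
  have hdvd := (Nat.modEq_iff_dvd' hLm.le).1
    ((natCast_mul_eq_natCast_mul_iff hcop).1 (add_left_cancel h))
  have := Nat.eq_of_dvd_of_lt_two_mul (by omega) hdvd (by omega)
  omega

lemma exists_add_natCast_mul_eq (hcop : n.Coprime i) (a b : Fin n) :
    ∃ L, n - 1 ≤ L ∧ L ≤ 2 * n - 2 ∧ a + L * i = b := by
  obtain ⟨t, ht⟩ := (bijective_add_natCast_mul hcop (a + (n - 1 : ℕ) * i)).2 b
  refine ⟨n - 1 + t, by omega, by omega, ?_⟩
  rw [← ht]; push_cast; ring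

lemma jordanLetter_apply (hin : i < n) (x : Bool) (a b : Fin n) :
    jordanLetter n i x a b = if x = noWrap i a ∧ a + i = b then 1 else 0 := by
  have hval : (a + i).val = if a.val + i < n then a.val + i else a.val + i - n := by
    rw [Fin.val_add_natCast]
    split_ifs with h
    · exact Nat.mod_eq_of_lt h
    · rw [Nat.mod_eq_sub_mod (by omega), Nat.mod_eq_of_lt (by omega)]
  have hb := b.isLt
  cases x <;>
  · simp only [jordanLetter, Bool.false_eq_true, if_false, if_true, ← transpose_pow,
      transpose_apply, jordan_pow_apply, noWrap, Fin.ext_iff, hval]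
    split_ifs <;> simp_all <;> omega

lemma noWrap_add_one {x : Fin n} (h1 : x + 1 ≠ 0) (h2 : x + 1 + i ≠ 0) :
    noWrap i (x + 1) = noWrap i x := by
  have hx1 : x + 1 = ((x.val + 1 : ℕ) : Fin n) := by push_cast; rfl
  have hx : x.val + 1 < n := by
    rw [hx1, Ne, Fin.natCast_eq_zero] at h1
    exact lt_of_le_of_ne x.isLt fun h => h1 ⟨1, by omega⟩
  have hxi : x.val + 1 + i ≠ n := by
    rw [hx1, ← Nat.cast_add, Ne, Fin.natCast_eq_zero] at h2
    exact fun h => h2 ⟨1, by omega⟩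
  rw [noWrap, noWrap, Fin.val_add_one_of_lt' hx]
  exact decide_eq_decide.2 (by omega)

lemma eq_zero_of_forall_noWrap_add (hi : 0 < i) (hin : i < n) {δ : Fin n}
    (h : ∀ x, noWrap i (x + δ) = noWrap i x) : δ = 0 := by
  let x₀ : Fin n := ⟨n - i - 1, by omega⟩
  have hboundary : ∀ y : Fin n, noWrap i y = true → noWrap i (y + 1) = false → y = x₀ := by
    intro y hy hy1
    rw [noWrap, decide_eq_true_iff] at hy
    rw [noWrap, Fin.val_add_one_of_lt' (by omega), decide_eq_false_iff_not] at hy1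
    exact Fin.ext (by simp only [x₀]; omega)
  have hx₀ : x₀.val + 1 < n := by simp only [x₀]; omega
  rw [← add_eq_left (a := x₀)]
  refine hboundary _ ?_ ?_
  · rw [h, noWrap, decide_eq_true_iff]; simp only [x₀]; omega
  · rw [add_right_comm, h, noWrap, Fin.val_add_one_of_lt' hx₀, decide_eq_false_iff_not]
    simp only [x₀]; omega

def orbitWord (n i : ℕ) [NeZero n] (L : ℕ) (a : Fin n) : List Bool :=
  itinerary (noWrap i) (· + (i : Fin n)) L a

@[simp]
lemma length_orbitWord (L : ℕ) (a : Fin n) : (orbitWord n i L a).length = L :=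
  length_itinerary _ _ _ _

lemma orbitWord_eq_orbitWord_iff {L : ℕ} {a b : Fin n} :
    orbitWord n i L a = orbitWord n i L b ↔
      ∀ t < L, noWrap i (a + t * i : Fin n) = noWrap i (b + t * i : Fin n) := by
  simp only [orbitWord, itinerary_eq_itinerary_iff, add_right_iterate, nsmul_eq_mul]

lemma list_prod_map_jordanLetter_apply (hin : i < n) (w : List Bool) (a b : Fin n) :
    (w.map (jordanLetter n i)).prod a b =
      if w = orbitWord n i w.length a ∧ a + w.length * i = b then 1 else 0 := by
  rw [Matrix.list_prod_map_apply_of_apply (jordanLetter_apply hin), add_right_iterate,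
    nsmul_eq_mul]
  rfl

lemma Bool.toNat_injective : Function.Injective Bool.toNat := by decide

lemma sum_toNat_noWrap_orbit (hcop : n.Coprime i) (a : Fin n) :
    ∑ t ∈ Finset.range n, (noWrap i (a + t * i : Fin n)).toNat =
      ∑ x : Fin n, (noWrap i x).toNat := by
  rw [← Fin.sum_univ_eq_sum_range (fun t => (noWrap i (a + t * i : Fin n)).toNat)]
  exact Fintype.sum_bijective _ (bijective_add_natCast_mul hcop a) _ _ fun _ => rfl

theorem orbitWord_injective (hi : 0 < i) (hin : i < n) (hcop : n.Coprime i) {L : ℕ}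
    (hL : n - 1 ≤ L) : Function.Injective (orbitWord n i L) := by
  intro a b hab
  rw [orbitWord_eq_orbitWord_iff] at hab
  have hsplit (g : ℕ → ℕ) :
      ∑ t ∈ Finset.range n, g t = ∑ t ∈ Finset.range (n - 1), g t + g (n - 1) := by
    rw [← Finset.sum_range_succ, Nat.sub_add_cancel NeZero.one_le]
  -- the number of `true` letters along a full period does not depend on the start
  have hlast := (sum_toNat_noWrap_orbit hcop a).trans (sum_toNat_noWrap_orbit hcop b).symm
  rw [hsplit, hsplit, Finset.sum_congr rfl fun t ht => by rw [hab t (by simp at ht; omega)],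
    add_right_inj, Bool.toNat_injective.eq_iff] at hlast
  have hperiod : ∀ t < n, noWrap i (a + t * i : Fin n) = noWrap i (b + t * i : Fin n) := by
    intro t ht
    rcases Nat.lt_or_ge t (n - 1) with ht' | ht'
    · exact hab t (by omega)
    · rwa [show t = n - 1 by omega]
  rw [← sub_eq_zero]
  refine eq_zero_of_forall_noWrap_add hi hin fun x => ?_
  obtain ⟨t, rfl⟩ := (bijective_add_natCast_mul hcop b).2 x
  rw [show b + (t : ℕ) * i + (a - b) = a + (t : ℕ) * i by abel]
  exact hperiod t t.isLt

lemma orbitWord_natCast_sub_one (hcop : n.Coprime i) {L : ℕ} (hL : L ≤ n - 2) :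
    orbitWord n i L ((i : Fin n) - 1) = orbitWord n i L i := by
  rw [orbitWord_eq_orbitWord_iff]
  intro t ht
  have e : (i : Fin n) - 1 + t * i + 1 = ((t + 1 : ℕ) : Fin n) * i := by push_cast; ring
  rw [← noWrap_add_one (x := (i - 1 + t * i : Fin n))]
  · congr 1; rw [e]; push_cast; ring
  · rw [e]; exact natCast_mul_ne_zero hcop (by omega) (by omega)
  · rw [e, show ((t + 1 : ℕ) : Fin n) * i + i = ((t + 2 : ℕ) : Fin n) * i by push_cast; ring]
    exact natCast_mul_ne_zero hcop (by omega) (by omega)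

theorem list_prod_map_jordanLetter_orbitWord (hi : 0 < i) (hin : i < n) (hcop : n.Coprime i)
    {L : ℕ} (hL : n - 1 ≤ L) (a : Fin n) :
    ((orbitWord n i L a).map (jordanLetter n i)).prod = single a (a + L * i) 1 := by
  ext a' b'
  rw [list_prod_map_jordanLetter_apply hin, single_apply, length_orbitWord]
  simp_rw [(orbitWord_injective hi hin hcop hL).eq_iff]
  exact if_congr (and_congr_right fun h => h ▸ Iff.rfl) rfl rfl

theorem list_prod_map_jordanLetter_orbitWord_notMem_wordSpan (hi : 0 < i) (hin : i < n)
    (hcop : n.Coprime i) {k : ℕ} (hk : k < 2 * n - 2) :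
    ((orbitWord n i (k + 1) ((i : Fin n) - 1)).map (jordanLetter n i)).prod ∉
      wordSpan n k (Set.range (jordanLetter n i)) := by
  set a : Fin n := (i : Fin n) - 1
  set b : Fin n := a + (k + 1 : ℕ) * i
  have hW := list_prod_map_jordanLetter_apply hin (orbitWord n i (k + 1) a)
  simp only [length_orbitWord] at hW
  have hlen : ∀ w : List Bool, w.length ≤ k → a + w.length * i = b → w.length + n = k + 1 :=
    fun w hw h => add_eq_of_add_natCast_mul_eq hcop (by omega) (by omega) h
  intro hmem
  rcases Nat.lt_or_ge (k + 1) n with hshort | hlong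
  · have hφ := wordSpan_range_le_ker _ (φ := entryLinearMap ℂ ℂ a b) (fun w hw => ?_) hmem
    · simp [hW, b] at hφ
    · rw [entryLinearMap_apply, list_prod_map_jordanLetter_apply hin, if_neg]
      exact fun h => by have := hlen w hw h.2; omega
  · have hφ := wordSpan_range_le_ker _
      (φ := entryLinearMap ℂ ℂ a b - entryLinearMap ℂ ℂ (a + 1) (b + 1))
      (fun w hw => ?_) hmem
    · have hne : orbitWord n i (k + 1) a ≠ orbitWord n i (k + 1) (a + 1) := fun h => by
        have h1 := orbitWord_injective hi hin hcop (by omega) h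
        rw [left_eq_add, ← Nat.cast_one, Fin.natCast_eq_zero, Nat.dvd_one] at h1
        omega
      simp [hW, b, hne] at hφ
    · rw [LinearMap.sub_apply, entryLinearMap_apply, entryLinearMap_apply,
        list_prod_map_jordanLetter_apply hin, list_prod_map_jordanLetter_apply hin, sub_eq_zero,
        add_right_comm]
      simp only [add_left_inj]
      refine if_congr (and_congr_left fun h => ?_) rfl rfl
      rw [show a + 1 = i from sub_add_cancel _ _,
        orbitWord_natCast_sub_one hcop (by have := hlen w hw h; omega)]

theorem wordSpan0_jordanLetter_eq_top (hi : 0 < i) (hin : i < n) (hcop : n.Coprime i) :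
    wordSpan0 n (2 * n - 2) (Set.range (jordanLetter n i)) = ⊤ := by
  rw [eq_top_iff, ← (Matrix.stdBasis ℂ (Fin n) (Fin n)).span_eq, Submodule.span_le]
  rintro _ ⟨⟨a, b⟩, rfl⟩
  obtain ⟨L, hL, hL', rfl⟩ := exists_add_natCast_mul_eq hcop a b
  rw [stdBasis_eq_single, ← list_prod_map_jordanLetter_orbitWord hi hin hcop hL]
  exact list_prod_map_mem_wordSpan0 _ (by simp; omega) (by simpa)

end JordanLetters

/-- For `0 < i < n` with `gcd(n, i) = 1`, the span of words of length between `1` and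
`2n - 2` in `S = {J_n^i, (J_nᵀ)^{n-i}}` is all of `M_n(ℂ)`; that is,
`l_0(S) = l(S) = 2n - 2` (lengths measured by stabilization of the word spans). -/
theorem stmt_18 (n i : ℕ) (hi : 0 < i) (hin : i < n) (hgcd : Nat.gcd n i = 1) :
    let S : Set (Matrix (Fin n) (Fin n) ℂ) := {jordan n ^ i, (jordan n)ᵀ ^ (n - i)}
    wordSpan0 n (2 * n - 2) S = ⊤ ∧
      sInf {k | wordSpan0 n k S = wordSpan0 n (k + 1) S} = 2 * n - 2 ∧
      sInf {k | wordSpan n k S = wordSpan n (k + 1) S} = 2 * n - 2 := by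
  intro S
  have : NeZero n := ⟨by omega⟩
  have hS : S = Set.range (jordanLetter n i) := range_jordanLetter.symm
  have htop0 : wordSpan0 n (2 * n - 2) S = ⊤ := hS ▸ wordSpan0_jordanLetter_eq_top hi hin hgcd
  have htop : wordSpan n (2 * n - 2) S = ⊤ :=
    top_le_iff.1 (htop0 ▸ wordSpan0_le_wordSpan n _ S)
  have hnew : ∀ k < 2 * n - 2, ∃ W ∈ wordSpan0 n (k + 1) S, W ∉ wordSpan n k S :=
    fun k hk => ⟨_, hS ▸ list_prod_map_mem_wordSpan0 _ (by simp) (by simp),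
      hS ▸ list_prod_map_jordanLetter_orbitWord_notMem_wordSpan hi hin hgcd hk⟩
  refine ⟨htop0, sInf_setOf_eq_succ_eq (wordSpan0_mono n S) htop0 fun k hk heq => ?_,
    sInf_setOf_eq_succ_eq (wordSpan_mono n S) htop fun k hk heq => ?_⟩
  · obtain ⟨W, hW, hW'⟩ := hnew k hk
    exact hW' (wordSpan0_le_wordSpan n k S (heq ▸ hW))
  · obtain ⟨W, hW, hW'⟩ := hnew k hk
    exact hW' (heq ▸ wordSpan0_le_wordSpan n _ S hW)
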